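/- arXiv:2501.13385 — 6 statements merged into one kernel-verified Lean document; each statement's English description precedes it below -/
import Mathlib

section
/- Let m ≥ 1, sizes d : Fin m → ℕ with d i ≥ 1, and ranks r : Fin (m+1) → ℕ with r 0 = 1. Suppose the TT cores T̃ i : Fin (d i) → Matrix (Fin (r i)) (Fin (r (i+1))) ℝ and positive weights D i : Fin (d i) → ℝ (D i x > 0) satisfy the new left-orthogonality condition: for every i, ∑_{x ∈ Fin (d i)} (D i x) • ((T̃ i x)ᵀ * (T̃ i x)) = 1 (the identity matrix of size r (i+1)). Then for every k with 1 ≤ k ≤ m, the k-th left part is columnwise orthogonal under the inner product weighted by the product of the weights: ∑ over tuples x ∈ (∀ j : Fin k, Fin (d j)) of (∏_{j < k} D j (x j)) • ((T̃ 0 (x 0) * ⋯ * T̃ (k-1) (x (k-1)))ᵀ * (T̃ 0 (x 0) * ⋯ * T̃ (k-1) (x (k-1)))) = 1 (the identity matrix of size r k). -/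
open Matrix

/-- Heterogeneous chain product of matrices `M 0 * M 1 * ⋯ * M (m-1)`. -/
noncomputable def chainProd {R : Type} [Semiring R] :
    {m : ℕ} → (ι : Fin (m + 1) → Type) → (∀ i, Fintype (ι i)) → (∀ i, DecidableEq (ι i)) →
    ((i : Fin m) → Matrix (ι i.castSucc) (ι i.succ) R) →
    Matrix (ι 0) (ι (Fin.last m)) R
  | 0, ι, _, de, _ => letI := de 0; (1 : Matrix (ι 0) (ι 0) R)
  | _ + 1, ι, ft, de, M =>
      letI := ft (Fin.succ 0)
      M 0 * chainProd (fun i => ι i.succ) (fun i => ft i.succ) (fun i => de i.succ)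
        (fun i => M i.succ)

/-- Chain product of TT cores with rank profile `r`. -/
noncomputable def ttChain {R : Type} [Semiring R] {m : ℕ} (r : Fin (m + 1) → ℕ)
    (M : (i : Fin m) → Matrix (Fin (r i.castSucc)) (Fin (r i.succ)) R) :
    Matrix (Fin (r 0)) (Fin (r (Fin.last m))) R :=
  chainProd (fun i => Fin (r i)) (fun _ => inferInstance) (fun _ => inferInstance) M

/-!
Induction on the number of cores, peeling off the first one. Writing the chain as
`T₀ x₀ * P y` with `P y` the chain of the remaining cores, the sum over `x₀` of
`D₀ x₀ • (T₀ x₀ * P y)ᵀ * (T₀ x₀ * P y)` is `(P y)ᵀ * (∑ D₀ x₀ • (T₀ x₀)ᵀ * T₀ x₀) * P y`,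
which the orthogonality of the first core reduces to `(P y)ᵀ * P y`; the remaining weighted sum
over `y` is the statement for the shorter chain.
-/

theorem ttChain_succ {R : Type} [Semiring R] {m : ℕ} (r : Fin (m + 2) → ℕ)
    (M : (i : Fin (m + 1)) → Matrix (Fin (r i.castSucc)) (Fin (r i.succ)) R) :
    ttChain r M = M 0 * ttChain (fun i => r i.succ) (fun i => M i.succ) := rfl

theorem Fintype.sum_pi_fin_succ {M : Type*} [AddCommMonoid M] {n : ℕ}
    {κ : Fin (n + 1) → Type*} [∀ i, Fintype (κ i)] (f : (∀ i, κ i) → M) :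
    ∑ x, f x = ∑ a : κ 0, ∑ y : ∀ i : Fin n, κ i.succ, f (Fin.cons a y) := by
  rw [← (Fin.consEquiv κ).sum_comp, Fintype.sum_prod_type]
  rfl

theorem Matrix.sum_smul_gram_mul_eq_gram {R ι a b c : Type*} [CommSemiring R]
    [Fintype ι] [Fintype a] [Fintype b] [DecidableEq b] {w : ι → R} {A : ι → Matrix a b R}
    (hA : ∑ x, w x • ((A x)ᵀ * A x) = 1) (P : Matrix b c R) :
    ∑ x, w x • ((A x * P)ᵀ * (A x * P)) = Pᵀ * P := by
  calc ∑ x, w x • ((A x * P)ᵀ * (A x * P)) = Pᵀ * (∑ x, w x • ((A x)ᵀ * A x)) * P := by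
        simp only [Matrix.mul_sum, Matrix.sum_mul, Matrix.mul_smul, Matrix.smul_mul,
          transpose_mul, Matrix.mul_assoc]
    _ = Pᵀ * P := by rw [hA, Matrix.mul_one]

theorem ttChain_weighted_orthogonal {R : Type} [CommSemiring R] :
    ∀ {m : ℕ} {κ : Fin m → Type*} [∀ i, Fintype (κ i)] (r : Fin (m + 1) → ℕ)
      (T : (i : Fin m) → κ i → Matrix (Fin (r i.castSucc)) (Fin (r i.succ)) R)
      (D : (i : Fin m) → κ i → R),
      (∀ i, ∑ x, D i x • ((T i x)ᵀ * T i x) = 1) →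
      ∑ x : ∀ i, κ i, (∏ i, D i (x i)) •
        ((ttChain r fun i => T i (x i))ᵀ * ttChain r fun i => T i (x i)) = 1
  | 0, _, _, _, _, _, _ => by simp [ttChain, chainProd]
  | m + 1, κ, _, r, T, D, horth => by
    have ih := ttChain_weighted_orthogonal (fun i => r i.succ) (fun i => T i.succ)
      (fun i => D i.succ) fun i => horth i.succ
    rw [Fintype.sum_pi_fin_succ, Finset.sum_comm, ← ih]
    refine Finset.sum_congr rfl fun y _ => ?_
    simp only [Fin.prod_univ_succ, Fin.cons_zero, Fin.cons_succ, ttChain_succ, mul_comm (D 0 _),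
      ← smul_smul, ← Finset.smul_sum]
    exact congrArg _ (Matrix.sum_smul_gram_mul_eq_gram (horth 0) _)

theorem left_part_weighted_orthogonal_general
    {m : ℕ} (d : Fin m → ℕ)
    (r : Fin (m + 1) → ℕ)
    (T : (i : Fin m) → Fin (d i) → Matrix (Fin (r i.castSucc)) (Fin (r i.succ)) ℝ)
    (D : (i : Fin m) → Fin (d i) → ℝ)
    (horth : ∀ i : Fin m, (∑ x : Fin (d i), D i x • ((T i x)ᵀ * (T i x))) = 1) :
    ∀ (k : ℕ) (hk1 : 1 ≤ k) (hk : k ≤ m),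
      (∑ x : ((j : Fin k) → Fin (d (Fin.castLE hk j))),
        (∏ j : Fin k, D (Fin.castLE hk j) (x j)) •
          ((ttChain (fun j : Fin (k + 1) => r (Fin.castLE (Nat.succ_le_succ hk) j))
              (fun j : Fin k => T (Fin.castLE hk j) (x j)))ᵀ *
            (ttChain (fun j : Fin (k + 1) => r (Fin.castLE (Nat.succ_le_succ hk) j))
              (fun j : Fin k => T (Fin.castLE hk j) (x j))))) = 1 :=
  fun _ _ hk => ttChain_weighted_orthogonal _ _ _ fun j => horth (Fin.castLE hk j)

/-- **Lemma 3.2.**  If the cores `T̃ i` are new-left-orthogonal with respect to the positive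
weights `D i` (i.e. `∑ x, D i x • (T̃ i x)ᵀ * (T̃ i x) = 1`), then for every `1 ≤ k ≤ m` the
`k`-th left part is columnwise orthogonal under the inner product weighted by the product of
the weights. -/
theorem left_part_weighted_orthogonal
    {m : ℕ} (hm : 1 ≤ m) (d : Fin m → ℕ) (hd : ∀ i, 1 ≤ d i)
    (r : Fin (m + 1) → ℕ) (h0 : r 0 = 1)
    (T : (i : Fin m) → Fin (d i) → Matrix (Fin (r i.castSucc)) (Fin (r i.succ)) ℝ)
    (D : (i : Fin m) → Fin (d i) → ℝ) (hD : ∀ i x, 0 < D i x)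
    (horth : ∀ i : Fin m, (∑ x : Fin (d i), D i x • ((T i x)ᵀ * (T i x))) = 1) :
    ∀ (k : ℕ) (hk1 : 1 ≤ k) (hk : k ≤ m),
      (∑ x : ((j : Fin k) → Fin (d (Fin.castLE hk j))),
        (∏ j : Fin k, D (Fin.castLE hk j) (x j)) •
          ((ttChain (fun j : Fin (k + 1) => r (Fin.castLE (Nat.succ_le_succ hk) j))
              (fun j : Fin k => T (Fin.castLE hk j) (x j)))ᵀ *
            (ttChain (fun j : Fin (k + 1) => r (Fin.castLE (Nat.succ_le_succ hk) j))
              (fun j : Fin k => T (Fin.castLE hk j) (x j))))) = 1 :=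
  left_part_weighted_orthogonal_general d r T D horth
end

section
/- Let p, r, d, s be natural numbers, W : Matrix (Fin p) (Fin p) ℝ, G : Matrix (Fin d) (Fin d) ℝ, A : Matrix (Fin p) (Fin r) ℝ with Aᵀ * W * A = 1 (identity of size r), and L : Matrix (Fin r × Fin d) (Fin s) ℝ with Lᵀ * (kronecker (1 : Matrix (Fin r) (Fin r) ℝ) G) * L = 1 (identity of size s). Then the matrix B := (kronecker A (1 : Matrix (Fin d) (Fin d) ℝ)) * L ∈ Matrix (Fin p × Fin d) (Fin s) ℝ satisfies Bᵀ * (kronecker W G) * B = 1 (identity of size s). -/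
open Matrix

open Kronecker in
/-- Inductive step in the proof of Lemma 3.2: weighted columnwise orthogonality of TT left
parts propagates through Kronecker products. -/
theorem kronecker_weighted_orthogonal_step
    (p r d s : ℕ)
    (W : Matrix (Fin p) (Fin p) ℝ) (G : Matrix (Fin d) (Fin d) ℝ)
    (A : Matrix (Fin p) (Fin r) ℝ) (hA : Aᵀ * W * A = 1)
    (L : Matrix (Fin r × Fin d) (Fin s) ℝ)
    (hL : Lᵀ * (Matrix.kroneckerMap (· * ·) (1 : Matrix (Fin r) (Fin r) ℝ) G) * L = 1) :
    ((Matrix.kroneckerMap (· * ·) A (1 : Matrix (Fin d) (Fin d) ℝ)) * L)ᵀ *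
        (Matrix.kroneckerMap (· * ·) W G) *
        ((Matrix.kroneckerMap (· * ·) A (1 : Matrix (Fin d) (Fin d) ℝ)) * L) = 1 := by
  have key : (Matrix.kroneckerMap (· * ·) A (1 : Matrix (Fin d) (Fin d) ℝ))ᵀ *
      (Matrix.kroneckerMap (· * ·) W G) *
      (Matrix.kroneckerMap (· * ·) A (1 : Matrix (Fin d) (Fin d) ℝ)) =
      Matrix.kroneckerMap (· * ·) (1 : Matrix (Fin r) (Fin r) ℝ) G := by
    show (A ⊗ₖ (1 : Matrix (Fin d) (Fin d) ℝ))ᵀ * (W ⊗ₖ G) *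
        (A ⊗ₖ (1 : Matrix (Fin d) (Fin d) ℝ)) = (1 : Matrix (Fin r) (Fin r) ℝ) ⊗ₖ G
    rw [← Matrix.kroneckerMap_transpose, ← Matrix.mul_kronecker_mul, ← Matrix.mul_kronecker_mul,
      Matrix.transpose_one, one_mul, mul_one, hA]
  calc ((Matrix.kroneckerMap (· * ·) A (1 : Matrix (Fin d) (Fin d) ℝ)) * L)ᵀ *
        (Matrix.kroneckerMap (· * ·) W G) *
        ((Matrix.kroneckerMap (· * ·) A (1 : Matrix (Fin d) (Fin d) ℝ)) * L)
      = Lᵀ * ((Matrix.kroneckerMap (· * ·) A (1 : Matrix (Fin d) (Fin d) ℝ))ᵀ *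
        (Matrix.kroneckerMap (· * ·) W G) *
        (Matrix.kroneckerMap (· * ·) A (1 : Matrix (Fin d) (Fin d) ℝ))) * L := by
        rw [Matrix.transpose_mul]; simp only [Matrix.mul_assoc]
    _ = 1 := by rw [key, hL]
end

section
/- Let m ≥ 1, sizes d : Fin m → ℕ with d i ≥ 1, tensors Z, 𝒢 : (∀ i, Fin (d i)) → ℝ, and ε > 0. For each mode i and slice index k ∈ Fin (d i), let S i k := ∑_{x : x i = k} (𝒢 x)² (the squared ℓ₂-norm of the k-th row of the mode-i unfolding of 𝒢), let g i k := ε + S i k, and let V := max over all i and k ∈ Fin (d i) of S i k (so V = ‖𝒢‖∨² in the paper's notation). Define the weighted squared norm ‖Z‖²_𝒲 := ∑_x (∏ i, (g i (x i)) ^ (1/(2m))) * (Z x)² (real rpow). Then √ε · (∑_x (Z x)²) ≤ ‖Z‖²_𝒲 ≤ √(ε + V) · (∑_x (Z x)²). -/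
/-!
Every weight is a geometric mean: the product of `m` factors `(g i (x i)) ^ (1 / (2m))`, each
of which lies between `ε ^ (1 / (2m))` and `(ε + V) ^ (1 / (2m))` because `0 ≤ S i k ≤ V`.
Hence every weight lies between `√ε` and `√(ε + V)`, and summing against `(Z x) ^ 2 ≥ 0`
gives both inequalities.
-/

open Finset

namespace Real

theorem prod_const_rpow_one_div_two_mul {n : ℕ} (hn : n ≠ 0) {c : ℝ} (hc : 0 ≤ c) :
    ∏ _i : Fin n, c ^ ((1 : ℝ) / (2 * n)) = √c := by
  rw [prod_const, card_univ, Fintype.card_fin, ← rpow_natCast, ← rpow_mul hc,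
    sqrt_eq_rpow]
  congr 1
  field_simp

theorem sqrt_le_prod_rpow_one_div_two_mul {n : ℕ} (hn : n ≠ 0) {a : ℝ} (ha : 0 ≤ a)
    {f : Fin n → ℝ} (hf : ∀ i, a ≤ f i) :
    √a ≤ ∏ i, f i ^ ((1 : ℝ) / (2 * n)) := by
  rw [← prod_const_rpow_one_div_two_mul hn ha]
  exact prod_le_prod (fun _ _ => by positivity)
    fun i _ => rpow_le_rpow ha (hf i) (by positivity)

theorem prod_rpow_one_div_two_mul_le_sqrt {n : ℕ} (hn : n ≠ 0) {b : ℝ}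
    {f : Fin n → ℝ} (hf₀ : ∀ i, 0 ≤ f i) (hf : ∀ i, f i ≤ b) :
    ∏ i, f i ^ ((1 : ℝ) / (2 * n)) ≤ √b := by
  have hb : 0 ≤ b := (hf₀ ⟨0, Nat.pos_of_ne_zero hn⟩).trans (hf _)
  rw [← prod_const_rpow_one_div_two_mul hn hb]
  exact prod_le_prod (fun i _ => rpow_nonneg (hf₀ i) _)
    fun i _ => rpow_le_rpow (hf₀ i) (hf i) (by positivity)

end Real

section WeightedSum

variable {ι : Type*} {s : Finset ι} {w f : ι → ℝ}

theorem Finset.mul_sum_le_sum_mul_of_le {a : ℝ} (hf : ∀ x ∈ s, 0 ≤ f x)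
    (hw : ∀ x ∈ s, a ≤ w x) : a * ∑ x ∈ s, f x ≤ ∑ x ∈ s, w x * f x := by
  rw [mul_sum]
  exact sum_le_sum fun x hx => mul_le_mul_of_nonneg_right (hw x hx) (hf x hx)

theorem Finset.sum_mul_le_mul_sum_of_le {b : ℝ} (hf : ∀ x ∈ s, 0 ≤ f x)
    (hw : ∀ x ∈ s, w x ≤ b) : ∑ x ∈ s, w x * f x ≤ b * ∑ x ∈ s, f x := by
  rw [mul_sum]
  exact sum_le_sum fun x hx => mul_le_mul_of_nonneg_right (hw x hx) (hf x hx)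

end WeightedSum

theorem weighted_norm_equivalence_general
    {m : ℕ} (hm : 1 ≤ m) (d : Fin m → ℕ)
    (Z G : ((i : Fin m) → Fin (d i)) → ℝ) (ε : ℝ) (hε : 0 < ε)
    (S : (i : Fin m) → Fin (d i) → ℝ)
    (hS : ∀ (i : Fin m) (k : Fin (d i)),
      S i k = ∑ x ∈ Finset.univ.filter (fun x : (j : Fin m) → Fin (d j) => x i = k), (G x) ^ 2)
    (g : (i : Fin m) → Fin (d i) → ℝ)
    (hg : ∀ (i : Fin m) (k : Fin (d i)), g i k = ε + S i k)
    (V : ℝ) (hV : IsGreatest {v : ℝ | ∃ (i : Fin m) (k : Fin (d i)), v = S i k} V) :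
    Real.sqrt ε * (∑ x, (Z x) ^ 2) ≤
        (∑ x, (∏ i, (g i (x i)) ^ ((1 : ℝ) / (2 * (m : ℝ)))) * (Z x) ^ 2) ∧
      (∑ x, (∏ i, (g i (x i)) ^ ((1 : ℝ) / (2 * (m : ℝ)))) * (Z x) ^ 2) ≤
        Real.sqrt (ε + V) * (∑ x, (Z x) ^ 2) := by
  have hm₀ : m ≠ 0 := Nat.one_le_iff_ne_zero.mp hm
  have hS₀ : ∀ i k, 0 ≤ S i k := fun i k => hS i k ▸ sum_nonneg fun x _ => sq_nonneg (G x)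
  have hε_le_g : ∀ i k, ε ≤ g i k := fun i k => hg i k ▸ le_add_of_nonneg_right (hS₀ i k)
  have hg_le : ∀ i k, g i k ≤ ε + V := fun i k =>
    hg i k ▸ add_le_add_right (hV.2 ⟨i, k, rfl⟩) ε
  have hZ : ∀ x ∈ (univ : Finset ((i : Fin m) → Fin (d i))), 0 ≤ Z x ^ 2 :=
    fun x _ => sq_nonneg (Z x)
  exact ⟨mul_sum_le_sum_mul_of_le hZ fun x _ =>
      Real.sqrt_le_prod_rpow_one_div_two_mul hm₀ hε.le fun i => hε_le_g i (x i),
    sum_mul_le_mul_sum_of_le hZ fun x _ =>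
      Real.prod_rpow_one_div_two_mul_le_sqrt hm₀
        (fun i => hε.le.trans (hε_le_g i (x i))) fun i => hg_le i (x i)⟩

/-- **Lemma 4.2 (norm equivalence).**  The preconditioned norm `‖·‖_𝒲` satisfies
`√ε ‖Z‖_F² ≤ ‖Z‖²_𝒲 ≤ √(ε + ‖𝒢‖∨²) ‖Z‖_F²`. -/
theorem weighted_norm_equivalence
    {m : ℕ} (hm : 1 ≤ m) (d : Fin m → ℕ) (hd : ∀ i, 1 ≤ d i)
    (Z G : ((i : Fin m) → Fin (d i)) → ℝ) (ε : ℝ) (hε : 0 < ε)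
    (S : (i : Fin m) → Fin (d i) → ℝ)
    (hS : ∀ (i : Fin m) (k : Fin (d i)),
      S i k = ∑ x ∈ Finset.univ.filter (fun x : (j : Fin m) → Fin (d j) => x i = k), (G x) ^ 2)
    (g : (i : Fin m) → Fin (d i) → ℝ)
    (hg : ∀ (i : Fin m) (k : Fin (d i)), g i k = ε + S i k)
    (V : ℝ) (hV : IsGreatest {v : ℝ | ∃ (i : Fin m) (k : Fin (d i)), v = S i k} V) :
    Real.sqrt ε * (∑ x, (Z x) ^ 2) ≤
        (∑ x, (∏ i, (g i (x i)) ^ ((1 : ℝ) / (2 * (m : ℝ)))) * (Z x) ^ 2) ∧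
      (∑ x, (∏ i, (g i (x i)) ^ ((1 : ℝ) / (2 * (m : ℝ)))) * (Z x) ^ 2) ≤
        Real.sqrt (ε + V) * (∑ x, (Z x) ^ 2) :=
  weighted_norm_equivalence_general hm d Z G ε hε S hS g hg V hV
end

section
/- Let E be a finite-dimensional real inner product space, W : E →ₗ[ℝ] E symmetric positive definite (hence bijective with inverse W⁻¹), K a subspace of E, and P̃ : E →ₗ[ℝ] E the W-orthogonal projection onto K. Let A : E →ₗ[ℝ] E be symmetric (⟨A x, y⟩ = ⟨x, A y⟩) and idempotent (A ∘ A = A). Fix e ∈ E, set G := A e and D := P̃ (W⁻¹ G), and assume A D ≠ 0. Then with α* := ⟨W D, D⟩ / ‖A D‖², for every real α: (1/2) * ⟨e - α* • D, A (e - α* • D)⟩ ≤ (1/2) * ⟨e - α • D, A (e - α • D)⟩. -/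
open scoped RealInnerProductSpace

/-!
Along the line `α ↦ e - α • D` the objective is the quadratic
`⟪e, A e⟫ - 2 α ⟪A e, D⟫ + α² ‖A D‖²`, because `A` is symmetric and idempotent.
The defining property of the `W`-orthogonal projection, tested against `D ∈ K`, turns the linear
coefficient into `⟪A e, D⟫ = ⟪W D, D⟫`, so the vertex of the parabola is exactly
`α* = ⟪W D, D⟫ / ‖A D‖²`. If `A D = 0`, then `⟪A e, D⟫ = ⟪e, A D⟫ = 0` as well and the objective
is constant.
-/

/-- If `a = 0`, then `b / a = 0` by Lean's convention and `b = 0`, so both sides are `c`. -/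
theorem quadratic_le_of_vertex {a b : ℝ} (c : ℝ) (ha : 0 ≤ a) (hb : a = 0 → b = 0) (α : ℝ) :
    c - 2 * (b / a) * b + (b / a) ^ 2 * a ≤ c - 2 * α * b + α ^ 2 * a := by
  rcases ha.eq_or_lt with rfl | ha
  · simp [hb rfl]
  · obtain ⟨s, rfl⟩ : ∃ s, b = s * a := ⟨b / a, (div_mul_cancel₀ b ha.ne').symm⟩
    rw [mul_div_cancel_right₀ s ha.ne']
    nlinarith [mul_nonneg ha.le (sq_nonneg (α - s))]

section InnerProduct

variable {E : Type*} [NormedAddCommGroup E] [InnerProductSpace ℝ E]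

theorem LinearMap.IsSymmetric.inner_sub_smul_apply_sub_smul {A : E →ₗ[ℝ] E}
    (hA : A.IsSymmetric) (e d : E) (α : ℝ) :
    ⟪e - α • d, A (e - α • d)⟫ = ⟪e, A e⟫ - 2 * α * ⟪A e, d⟫ + α ^ 2 * ⟪d, A d⟫ := by
  have hde : ⟪d, A e⟫ = ⟪A e, d⟫ := real_inner_comm _ _
  have hed : ⟪e, A d⟫ = ⟪A e, d⟫ := (hA e d).symm
  simp only [map_sub, map_smul, inner_sub_left, inner_sub_right, real_inner_smul_left,
    real_inner_smul_right, hde, hed]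
  ring

theorem LinearMap.IsSymmetric.inner_apply_self_eq_norm_sq_of_idempotent {A : E →ₗ[ℝ] E}
    (hA : A.IsSymmetric) (hAidem : ∀ x, A (A x) = A x) (x : E) :
    ⟪x, A x⟫ = ‖A x‖ ^ 2 := by
  rw [← real_inner_self_eq_norm_sq, hA, hAidem]

theorem inner_apply_proj_inv_eq {W Winv P : E →ₗ[ℝ] E} {K : Submodule ℝ E}
    (hWinv : ∀ x, W (Winv x) = x) (hP : ∀ x, ∀ k ∈ K, ⟪W (x - P x), k⟫ = 0)
    (g : E) {k : E} (hk : k ∈ K) :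
    ⟪W (P (Winv g)), k⟫ = ⟪g, k⟫ := by
  have h := hP (Winv g) k hk
  rwa [map_sub, inner_sub_left, hWinv, sub_eq_zero, eq_comm] at h

end InnerProduct

theorem adaptive_stepsize_optimal_general
    {E : Type*} [NormedAddCommGroup E] [InnerProductSpace ℝ E]
    (W Winv : E →ₗ[ℝ] E)
    (hWinv1 : ∀ x : E, W (Winv x) = x)
    (K : Submodule ℝ E) (P : E →ₗ[ℝ] E)
    (hP1 : ∀ x : E, P x ∈ K)
    (hP3 : ∀ x : E, ∀ k ∈ K, ⟪W (x - P x), k⟫ = 0)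
    (A : E →ₗ[ℝ] E)
    (hAsym : ∀ x y : E, ⟪A x, y⟫ = ⟪x, A y⟫)
    (hAidem : ∀ x : E, A (A x) = A x)
    (e : E) (G D : E) (hG : G = A e) (hD : D = P (Winv G))
    (αstar : ℝ) (hαstar : αstar = ⟪W D, D⟫ / ‖A D‖ ^ 2) :
    ∀ α : ℝ,
      (1 / 2) * ⟪e - αstar • D, A (e - αstar • D)⟫ ≤
        (1 / 2) * ⟪e - α • D, A (e - α • D)⟫ := by
  have hA : A.IsSymmetric := hAsym
  have hcoef : ⟪A e, D⟫ = ⟪W D, D⟫ := by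
    rw [hD, hG, inner_apply_proj_inv_eq hWinv1 hP3 _ (hP1 _)]
  have hdeg : ‖A D‖ ^ 2 = 0 → ⟪W D, D⟫ = 0 := fun h => by
    rw [← hcoef, hAsym, norm_eq_zero.mp (pow_eq_zero_iff two_ne_zero |>.mp h), inner_zero_right]
  intro α
  gcongr
  simp only [hA.inner_sub_smul_apply_sub_smul,
    hA.inner_apply_self_eq_norm_sq_of_idempotent hAidem, hcoef, hαstar]
  exact quadratic_le_of_vertex _ (sq_nonneg _) hdeg α

/-- The adaptive step-size formula (3.7): `α* = ⟨W D, D⟩ / ‖A D‖²` minimizes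
`α ↦ ½⟨e - α D, A (e - α D)⟩`, where `D = 𝒫̃(W⁻¹ (A e))` is the preconditioned Riemannian
gradient, `𝒫̃` is the `W`-orthogonal projection onto `K`, and `A` is symmetric idempotent. -/
theorem adaptive_stepsize_optimal
    {E : Type*} [NormedAddCommGroup E] [InnerProductSpace ℝ E] [FiniteDimensional ℝ E]
    (W Winv : E →ₗ[ℝ] E)
    (hWsym : ∀ x y : E, ⟪W x, y⟫ = ⟪x, W y⟫)
    (hWpd : ∀ x : E, x ≠ 0 → 0 < ⟪W x, x⟫)
    (hWinv1 : ∀ x : E, W (Winv x) = x) (hWinv2 : ∀ x : E, Winv (W x) = x)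
    (K : Submodule ℝ E) (P : E →ₗ[ℝ] E)
    (hP1 : ∀ x : E, P x ∈ K) (hP2 : ∀ k ∈ K, P k = k)
    (hP3 : ∀ x : E, ∀ k ∈ K, ⟪W (x - P x), k⟫ = 0)
    (A : E →ₗ[ℝ] E)
    (hAsym : ∀ x y : E, ⟪A x, y⟫ = ⟪x, A y⟫)
    (hAidem : ∀ x : E, A (A x) = A x)
    (e : E) (G D : E) (hG : G = A e) (hD : D = P (Winv G)) (hAD : A D ≠ 0)
    (αstar : ℝ) (hαstar : αstar = ⟪W D, D⟫ / ‖A D‖ ^ 2) :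
    ∀ α : ℝ,
      (1 / 2) * ⟪e - αstar • D, A (e - αstar • D)⟫ ≤
        (1 / 2) * ⟪e - α • D, A (e - α • D)⟫ :=
  adaptive_stepsize_optimal_general W Winv hWinv1 K P hP1 hP3 A hAsym hAidem e G D hG hD αstar
    hαstar
end

section
/- Let E be a finite-dimensional real inner product space, S : E →ₗ[ℝ] E symmetric positive definite (hence bijective with inverse S⁻¹), and set W := S ∘ S. Let K be a subspace of E, let K̂ := the image of K under S, and let P̂ : E →ₗ[ℝ] E be the (standard) orthogonal projection onto K̂. Then Q := S⁻¹ ∘ P̂ ∘ S is the W-orthogonal projection onto K: for every x ∈ E, Q x ∈ K; Q k = k for every k ∈ K; and ⟨W (x - Q x), k⟩ = 0 for every x ∈ E and k ∈ K. -/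
open scoped RealInnerProductSpace

/-- Linear-algebraic content of Lemma 3.5: with `W = S ∘ S` (`S` symmetric positive definite)
and `P̂` the standard orthogonal projection onto `K̂ = S(K)`, the map `Q = S⁻¹ ∘ P̂ ∘ S` is the
`W`-orthogonal projection onto `K`. -/
theorem preconditioned_projection_conjugation
    {E : Type*} [NormedAddCommGroup E] [InnerProductSpace ℝ E] [FiniteDimensional ℝ E]
    (S Sinv : E →ₗ[ℝ] E)
    (hSsym : ∀ x y : E, ⟪S x, y⟫ = ⟪x, S y⟫)
    (hSpd : ∀ x : E, x ≠ 0 → 0 < ⟪S x, x⟫)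
    (hSinv1 : ∀ x : E, S (Sinv x) = x) (hSinv2 : ∀ x : E, Sinv (S x) = x)
    (K : Submodule ℝ E)
    (Phat : E →ₗ[ℝ] E)
    (hP1 : ∀ x : E, Phat x ∈ K.map S)
    (hP2 : ∀ k ∈ K.map S, Phat k = k)
    (hP3 : ∀ x : E, ∀ k ∈ K.map S, ⟪x - Phat x, k⟫ = 0) :
    (∀ x : E, Sinv (Phat (S x)) ∈ K) ∧
      (∀ k ∈ K, Sinv (Phat (S k)) = k) ∧
      (∀ x : E, ∀ k ∈ K, ⟪S (S (x - Sinv (Phat (S x)))), k⟫ = 0) := by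
  refine ⟨?_, ?_, ?_⟩
  · intro x
    obtain ⟨k, hk, hke⟩ := hP1 (S x)
    rw [← hke, hSinv2]
    exact hk
  · intro k hk
    rw [hP2 (S k) ⟨k, hk, rfl⟩, hSinv2]
  · intro x k hk
    have h : S (x - Sinv (Phat (S x))) = S x - Phat (S x) := by
      rw [map_sub, hSinv1]
    rw [h, hSsym]
    exact hP3 (S x) (S k) ⟨k, hk, rfl⟩
end

section
/- Let n ≥ 1 and let σ : Fin 4 → Matrix (Fin 2) (Fin 2) ℂ be the Pauli matrices σ₀ = !![1,0;0,1], σ₁ = !![0,1;1,0], σ₂ = !![0,-I;I,0], σ₃ = !![1,0;0,-1]. Let r : Fin (n+1) → ℕ with r 0 = r n = 1 and let X k : Fin 2 → Fin 2 → Matrix (Fin (r k)) (Fin (r (k+1))) ℂ be MPO cores. Define the density-matrix entries ρ : Matrix ((k : Fin n) → Fin 2) ((k : Fin n) → Fin 2) ℂ by ρ i j = the unique entry of the chain product X 0 (i 0) (j 0) * X 1 (i 1) (j 1) * ⋯ * X (n-1) (i (n-1)) (j (n-1)), and for a : Fin n → Fin 4 define the Pauli basis matrix W_a i j := ∏ k,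 σ (a k) (i k) (j k). Then for every a : Fin n → Fin 4, the trace Matrix.trace (ρ * W_a) equals the unique entry of the chain product Y 0 (a 0) * Y 1 (a 1) * ⋯ * Y (n-1) (a (n-1)), where Y k (α) := ∑_{i, j ∈ Fin 2} (σ α j i) • X k i j. -/
open Matrix Complex

/-!
`Tr(ρ W_a) = ∑_{i,j} ρ i j * W_a j i`, where `ρ i j` is the chain product of the cores
`X k (i k) (j k)` and `W_a j i` is the product of the scalars `σ (a k) (j k) (i k)`. The chain
product is multilinear in its factors, so the sum over `i, j` distributes over the sites and
collapses to the chain product of the cores `Y k (a k) = ∑ i j, σ (a k) j i • X k i j`.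
-/

lemma chainProd_succ {R : Type} [Semiring R] {m : ℕ} (ι : Fin (m + 2) → Type)
    (ft : ∀ i, Fintype (ι i)) (de : ∀ i, DecidableEq (ι i))
    (M : (i : Fin (m + 1)) → Matrix (ι i.castSucc) (ι i.succ) R) :
    chainProd ι ft de M =
      letI := ft 1
      M 0 * chainProd (fun i => ι i.succ) (fun i => ft i.succ) (fun i => de i.succ)
        (fun i => M i.succ) :=
  rfl

theorem chainProd_sum_smul {R : Type} [CommSemiring R] {m : ℕ} (ι : Fin (m + 1) → Type)
    (ft : ∀ i, Fintype (ι i)) (de : ∀ i, DecidableEq (ι i))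
    {β : Fin m → Type} [∀ i, Fintype (β i)]
    (c : (i : Fin m) → β i → R) (M : (i : Fin m) → β i → Matrix (ι i.castSucc) (ι i.succ) R) :
    chainProd ι ft de (fun i => ∑ b, c i b • M i b) =
      ∑ f : (i : Fin m) → β i, (∏ i, c i (f i)) • chainProd ι ft de (fun i => M i (f i)) := by
  induction m with
  | zero => simp [chainProd]
  | succ m ih =>
    rw [chainProd_succ, ih, Matrix.sum_mul, ← (Fin.consEquiv β).sum_comp, Fintype.sum_prod_type]
    refine Finset.sum_congr rfl fun b _ => ?_
    rw [Matrix.mul_sum]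
    refine Finset.sum_congr rfl fun g _ => ?_
    rw [chainProd_succ, Fin.prod_univ_succ]
    simp only [Fin.consEquiv_apply, Fin.cons_zero, Fin.cons_succ, Matrix.smul_mul,
      Matrix.mul_smul, smul_smul, mul_comm]
    rfl

theorem ttChain_sum_sum_smul {R : Type} [CommSemiring R] {m : ℕ} (r : Fin (m + 1) → ℕ)
    {α β : Type} [Fintype α] [Fintype β] (c : Fin m → α → β → R)
    (M : (i : Fin m) → α → β → Matrix (Fin (r i.castSucc)) (Fin (r i.succ)) R) :
    ttChain r (fun i => ∑ a, ∑ b, c i a b • M i a b) =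
      ∑ f : Fin m → α, ∑ g : Fin m → β,
        (∏ i, c i (f i) (g i)) • ttChain r (fun i => M i (f i) (g i)) := by
  simp_rw [← Fintype.sum_prod_type']
  refine (chainProd_sum_smul (fun i => Fin (r i)) _ _ (fun i (p : α × β) => c i p.1 p.2)
    (fun i p => M i p.1 p.2)).trans ?_
  exact Fintype.sum_equiv (Equiv.arrowProdEquivProdArrow _ _ _) _ _ fun _ => rfl

theorem pauli_measurements_tt_format_general
    {n : ℕ}
    (σ : Fin 4 → Matrix (Fin 2) (Fin 2) ℂ)
    (r : Fin (n + 1) → ℕ)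
    (X : (k : Fin n) → Fin 2 → Fin 2 → Matrix (Fin (r k.castSucc)) (Fin (r k.succ)) ℂ)
    (ρ : Matrix ((k : Fin n) → Fin 2) ((k : Fin n) → Fin 2) ℂ)
    (hρ : ∀ (i j : (k : Fin n) → Fin 2) (a : Fin (r 0)) (b : Fin (r (Fin.last n))),
      ρ i j = ttChain r (fun k => X k (i k) (j k)) a b)
    (W : (Fin n → Fin 4) → Matrix ((k : Fin n) → Fin 2) ((k : Fin n) → Fin 2) ℂ)
    (hW : ∀ (a : Fin n → Fin 4) (i j : (k : Fin n) → Fin 2),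
      W a i j = ∏ k, σ (a k) (i k) (j k)) :
    ∀ (a : Fin n → Fin 4) (u : Fin (r 0)) (v : Fin (r (Fin.last n))),
      Matrix.trace (ρ * W a) =
        ttChain r (fun k => ∑ i : Fin 2, ∑ j : Fin 2, σ (a k) j i • X k i j) u v := by
  intro a u v
  simp only [Matrix.trace, Matrix.diag_apply, Matrix.mul_apply, ttChain_sum_sum_smul,
    Matrix.sum_apply, Matrix.smul_apply, smul_eq_mul, hρ _ _ u v, hW, mul_comm]

/-- Section 5.3: the tensor of Pauli measurements `𝒯*(𝐚) = Tr(ρ W_𝐚)` of a matrix product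
operator `ρ` with cores `X k` is an order-`n` TT-format tensor with cores
`Y k α = ∑ i j, σ_α(j, i) • X k i j`. -/
theorem pauli_measurements_tt_format
    {n : ℕ} (hn : 1 ≤ n)
    (σ : Fin 4 → Matrix (Fin 2) (Fin 2) ℂ)
    (hσ0 : σ 0 = !![1, 0; 0, 1])
    (hσ1 : σ 1 = !![0, 1; 1, 0])
    (hσ2 : σ 2 = !![0, -Complex.I; Complex.I, 0])
    (hσ3 : σ 3 = !![1, 0; 0, -1])
    (r : Fin (n + 1) → ℕ) (h0 : r 0 = 1) (hlast : r (Fin.last n) = 1)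
    (X : (k : Fin n) → Fin 2 → Fin 2 → Matrix (Fin (r k.castSucc)) (Fin (r k.succ)) ℂ)
    (ρ : Matrix ((k : Fin n) → Fin 2) ((k : Fin n) → Fin 2) ℂ)
    (hρ : ∀ (i j : (k : Fin n) → Fin 2) (a : Fin (r 0)) (b : Fin (r (Fin.last n))),
      ρ i j = ttChain r (fun k => X k (i k) (j k)) a b)
    (W : (Fin n → Fin 4) → Matrix ((k : Fin n) → Fin 2) ((k : Fin n) → Fin 2) ℂ)
    (hW : ∀ (a : Fin n → Fin 4) (i j : (k : Fin n) → Fin 2),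
      W a i j = ∏ k, σ (a k) (i k) (j k)) :
    ∀ (a : Fin n → Fin 4) (u : Fin (r 0)) (v : Fin (r (Fin.last n))),
      Matrix.trace (ρ * W a) =
        ttChain r (fun k => ∑ i : Fin 2, ∑ j : Fin 2, σ (a k) j i • X k i j) u v :=
  pauli_measurements_tt_format_general σ r X ρ hρ W hW
end
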